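/- Let r ≥ s ≥ 0 be natural numbers with r ≥ 1 and let S, T ⊆ {0,1}^n be nonempty. Then log₂( Σ_{x∈S} Σ_{y∈T} r^{a(x,y)} s^{d(x,y)} ) ≤ n(log₂(r+s) − s/r) + ((r+s)/(2r))(log₂|S| + log₂|T|), where a(x,y) and d(x,y) count agreements and disagreements of coordinates. -/

import Mathlib

open Finset Real

def agree {n : ℕ} (x y : Fin n → Bool) : ℕ := (Finset.univ.filter (fun i => x i = y i)).card

/-!
With `w a b = r` for `a = b` and `w a b = s` otherwise, the sum is the bilinear form
`∑ x, ∑ y, 1_S x * 1_T y * ∏ i, w (x i) (y i)`. For `p = 2r/(r+s) ∈ [1, 2]` the two-point bound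
`∑ a, ∑ b, f a * g b * w a b ≤ (r+s) 2^(-s/r) ‖f‖_p ‖g‖_p` (the dual form of Bonami's two-point
hypercontractive inequality, with correlation `p - 1`) tensorizes over the coordinates, since
`‖f‖_p` is the `p`-norm of the `p`-norms of the slices of `f`. For indicators
`‖1_S‖_p = |S| ^ ((r+s)/(2r))`, and `log₂` gives the claim.

The two-point bound is Cauchy–Schwarz for the form `E E' + (p-1) D D'` together with
`((a+b)/2)² + (p-1)((a-b)/2)² ≤ ((a^p + b^p)/2)^(2/p)`, which after normalising `a + b = 2` is
Bernoulli's inequality combined with `(1+x)^p + (1-x)^p ≥ 2 + p(p-1)x²`.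
-/

-- Meant for nonnegative `f`: no absolute values are taken.
noncomputable def pNorm {ι : Type*} [Fintype ι] (p : ℝ) (f : ι → ℝ) : ℝ := (∑ i, f i ^ p) ^ p⁻¹

def KernelBound {α : Type*} [Fintype α] (p C : ℝ) (w : α → α → ℝ) : Prop :=
  ∀ f g : α → ℝ, (∀ a, 0 ≤ f a) → (∀ b, 0 ≤ g b) →
    ∑ a, ∑ b, f a * g b * w a b ≤ C * pNorm p f * pNorm p g

section KernelBound

variable {ι α : Type*} [Fintype ι] [Fintype α] {p : ℝ}

lemma pNorm_nonneg {f : ι → ℝ} (hf : ∀ i, 0 ≤ f i) : 0 ≤ pNorm p f :=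
  rpow_nonneg (sum_nonneg fun i _ => rpow_nonneg (hf i) p) _

lemma sum_pi_fin_succ {M : Type*} [AddCommMonoid M] {n : ℕ} (F : (Fin (n + 1) → α) → M) :
    ∑ x, F x = ∑ a, ∑ u, F (Fin.cons a u) := by
  rw [← (Fin.consEquiv fun _ => α).sum_comp, Fintype.sum_prod_type]
  rfl

lemma pNorm_pi_fin_succ {n : ℕ} (hp : p ≠ 0) {f : (Fin (n + 1) → α) → ℝ} (hf : ∀ x, 0 ≤ f x) :
    pNorm p f = pNorm p fun a => pNorm p fun u => f (Fin.cons a u) := by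
  unfold pNorm
  congr 1
  rw [sum_pi_fin_succ]
  exact sum_congr rfl fun a _ =>
    (rpow_inv_rpow (sum_nonneg fun u _ => rpow_nonneg (hf _) p) hp).symm

theorem KernelBound.pi {C : ℝ} {w : α → α → ℝ} (h : KernelBound p C w) (hp : p ≠ 0)
    (hC : 0 ≤ C) (hw : ∀ a b, 0 ≤ w a b) (n : ℕ) :
    KernelBound p (C ^ n) fun x y : Fin n → α => ∏ i, w (x i) (y i) := by
  induction n with
  | zero =>
    intro f g hf hg
    simp only [Fintype.sum_unique, univ_eq_empty, prod_empty, mul_one, pow_zero, one_mul,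
      pNorm, rpow_rpow_inv (hf _) hp, rpow_rpow_inv (hg _) hp, le_refl]
  | succ n ih =>
    intro f g hf hg
    set F := fun a => pNorm p fun u => f (Fin.cons a u)
    set G := fun b => pNorm p fun v => g (Fin.cons b v)
    calc ∑ x, ∑ y, f x * g y * ∏ i, w (x i) (y i)
        = ∑ a, ∑ b, w a b * ∑ u, ∑ v,
            f (Fin.cons a u) * g (Fin.cons b v) * ∏ i, w (u i) (v i) := by
          simp only [sum_pi_fin_succ, Fin.prod_univ_succ, Fin.cons_zero, Fin.cons_succ, mul_sum]
          refine sum_congr rfl fun a _ => ?_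
          rw [sum_comm]
          refine sum_congr rfl fun b _ => sum_congr rfl fun u _ => sum_congr rfl fun v _ => ?_
          ring
      _ ≤ ∑ a, ∑ b, w a b * (C ^ n * F a * G b) := by
          gcongr with a _ b _
          · exact hw a b
          · exact ih _ _ (fun u => hf _) (fun v => hg _)
      _ = C ^ n * ∑ a, ∑ b, F a * G b * w a b := by
          simp only [mul_sum]
          refine sum_congr rfl fun a _ => sum_congr rfl fun b _ => ?_
          ring
      _ ≤ C ^ n * (C * pNorm p F * pNorm p G) := by
          gcongr
          exact h F G (fun a => pNorm_nonneg fun u => hf _) (fun b => pNorm_nonneg fun v => hg _)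
      _ = C ^ (n + 1) * pNorm p f * pNorm p g := by
          rw [pNorm_pi_fin_succ hp hf, pNorm_pi_fin_succ hp hg, pow_succ]
          ring

lemma KernelBound.const_mul {C c : ℝ} {w : α → α → ℝ}
    (h : KernelBound p C w) (hc : 0 ≤ c) : KernelBound p (c * C) fun a b => c * w a b := by
  intro f g hf hg
  calc ∑ a, ∑ b, f a * g b * (c * w a b) = c * ∑ a, ∑ b, f a * g b * w a b := by
        simp only [mul_sum]
        exact sum_congr rfl fun a _ => sum_congr rfl fun b _ => by ring
    _ ≤ c * (C * pNorm p f * pNorm p g) := by gcongr; exact h f g hf hg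
    _ = c * C * pNorm p f * pNorm p g := by ring

end KernelBound

lemma two_le_one_add_rpow_add_one_sub_rpow {β t : ℝ} (hβ : β ≤ 0) (ht₁ : -1 < t) (ht₂ : t < 1) :
    2 ≤ (1 + t) ^ β + (1 - t) ^ β := by
  have ha : 0 < (1 + t) ^ β := rpow_pos_of_pos (by linarith) β
  have hb : 0 < (1 - t) ^ β := rpow_pos_of_pos (by linarith) β
  have hab : 1 ≤ (1 + t) ^ β * (1 - t) ^ β := by
    rw [← mul_rpow (by linarith) (by linarith)]
    exact one_le_rpow_of_pos_of_le_one_of_nonpos (by nlinarith) (by nlinarith [sq_nonneg t]) hβ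
  nlinarith [sq_nonneg ((1 + t) ^ β - (1 - t) ^ β)]

lemma continuous_one_add_rpow_add_mul_one_sub_rpow {q : ℝ} (hq : 0 ≤ q) (c : ℝ) :
    Continuous fun t : ℝ => (1 + t) ^ q + c * (1 - t) ^ q := by
  have := continuous_rpow_const hq
  fun_prop

lemma hasDerivAt_one_add_rpow_add_mul_one_sub_rpow (q c : ℝ) {t : ℝ} (ht₁ : -1 < t) (ht₂ : t < 1) :
    HasDerivAt (fun t : ℝ => (1 + t) ^ q + c * (1 - t) ^ q)
      (q * ((1 + t) ^ (q - 1) - c * (1 - t) ^ (q - 1))) t := by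
  have hplus := ((hasDerivAt_id t).const_add 1).rpow_const (p := q) (Or.inl (by simp; linarith))
  have hminus := ((hasDerivAt_id t).const_sub 1).rpow_const (p := q) (Or.inl (by simp; linarith))
  exact (hplus.add (hminus.const_mul c)).congr_deriv (by simp only [id]; ring)

lemma le_of_hasDerivAt_nonneg_on_unitInterval {f f' : ℝ → ℝ} (hf : Continuous f)
    (hf' : ∀ t ∈ Set.Ioo (0 : ℝ) 1, HasDerivAt f (f' t) t)
    (hf'₀ : ∀ t ∈ Set.Ioo (0 : ℝ) 1, 0 ≤ f' t) {x : ℝ} (hx₀ : 0 ≤ x) (hx₁ : x ≤ 1) :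
    f 0 ≤ f x := by
  refine monotoneOn_of_hasDerivWithinAt_nonneg (f' := f') (convex_Icc 0 1) hf.continuousOn
    (fun t ht => ?_) (fun t ht => ?_) (by simp) ⟨hx₀, hx₁⟩ hx₀
  · rw [interior_Icc] at ht ⊢
    exact (hf' t ht).hasDerivWithinAt
  · rw [interior_Icc] at ht
    exact hf'₀ t ht

lemma two_mul_mul_le_one_add_rpow_sub_one_sub_rpow {q x : ℝ} (hq₀ : 0 ≤ q) (hq₁ : q ≤ 1)
    (hx₀ : 0 ≤ x) (hx₁ : x ≤ 1) :
    2 * q * x ≤ (1 + x) ^ q - (1 - x) ^ q := by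
  have key := le_of_hasDerivAt_nonneg_on_unitInterval
    (f := fun t => (1 + t) ^ q + (-1) * (1 - t) ^ q - 2 * q * t)
    (f' := fun t => q * ((1 + t) ^ (q - 1) - (-1) * (1 - t) ^ (q - 1)) - 2 * q)
    ((continuous_one_add_rpow_add_mul_one_sub_rpow hq₀ _).sub (by fun_prop))
    (fun t ht => (hasDerivAt_one_add_rpow_add_mul_one_sub_rpow q (-1) (by linarith [ht.1]) ht.2).sub
      (by simpa using (hasDerivAt_id t).const_mul (2 * q)))
    (fun t ht => by
      have := two_le_one_add_rpow_add_one_sub_rpow (β := q - 1) (by linarith) (by linarith [ht.1])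
        ht.2
      nlinarith)
    hx₀ hx₁
  simp only [add_zero, sub_zero, one_rpow, mul_zero] at key
  linarith

lemma two_add_mul_sq_le_one_add_rpow_add_one_sub_rpow {p x : ℝ} (hp₁ : 1 ≤ p) (hp₂ : p ≤ 2)
    (hx : |x| ≤ 1) :
    2 + p * (p - 1) * x ^ 2 ≤ (1 + x) ^ p + (1 - x) ^ p := by
  wlog hx₀ : 0 ≤ x generalizing x
  · have := this (x := -x) (by rwa [abs_neg]) (by linarith)
    rw [neg_sq, sub_neg_eq_add, ← sub_eq_add_neg] at this
    linarith
  have key := le_of_hasDerivAt_nonneg_on_unitInterval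
    (f := fun t => (1 + t) ^ p + 1 * (1 - t) ^ p - p * (p - 1) * t ^ 2)
    (f' := fun t => p * ((1 + t) ^ (p - 1) - 1 * (1 - t) ^ (p - 1)) - p * (p - 1) * (2 * t))
    ((continuous_one_add_rpow_add_mul_one_sub_rpow (by linarith) _).sub (by fun_prop))
    (fun t ht => (hasDerivAt_one_add_rpow_add_mul_one_sub_rpow p 1 (by linarith [ht.1]) ht.2).sub
      (by simpa using (hasDerivAt_pow 2 t).const_mul (p * (p - 1))))
    (fun t ht => by
      have := two_mul_mul_le_one_add_rpow_sub_one_sub_rpow (q := p - 1) (by linarith) (by linarith)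
        ht.1.le ht.2.le
      nlinarith)
    hx₀ (abs_le.mp hx).2
  simp only [add_zero, sub_zero, one_rpow, one_mul] at key
  nlinarith

lemma one_add_mul_sq_rpow_le {p ε : ℝ} (hp₁ : 1 ≤ p) (hp₂ : p ≤ 2) (hε : |ε| ≤ 1) :
    (1 + (p - 1) * ε ^ 2) ^ (p / 2) ≤ ((1 + ε) ^ p + (1 - ε) ^ p) / 2 := by
  have hε2 : ε ^ 2 ≤ 1 := by nlinarith [abs_nonneg ε, sq_abs ε]
  calc (1 + (p - 1) * ε ^ 2) ^ (p / 2) ≤ 1 + p / 2 * ((p - 1) * ε ^ 2) :=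
        rpow_one_add_le_one_add_mul_self (by nlinarith [sq_nonneg ε]) (by linarith) (by linarith)
    _ ≤ ((1 + ε) ^ p + (1 - ε) ^ p) / 2 := by
        linarith [two_add_mul_sq_le_one_add_rpow_add_one_sub_rpow hp₁ hp₂ hε]

lemma sq_add_mul_sq_rpow_le {p a b : ℝ} (hp₁ : 1 ≤ p) (hp₂ : p ≤ 2) (ha : 0 ≤ a) (hb : 0 ≤ b) :
    (((a + b) / 2) ^ 2 + (p - 1) * ((a - b) / 2) ^ 2) ^ (p / 2) ≤ (a ^ p + b ^ p) / 2 := by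
  rcases (add_nonneg ha hb).eq_or_lt with hab | hab
  · obtain ⟨rfl, rfl⟩ : a = 0 ∧ b = 0 := ⟨by linarith, by linarith⟩
    simp [zero_rpow (by linarith : p / 2 ≠ 0), zero_rpow (by linarith : p ≠ 0)]
  set E := (a + b) / 2
  set ε := (a - b) / (a + b)
  have hE : 0 < E := by positivity
  have hε : |ε| ≤ 1 := by
    rw [abs_le, le_div_iff₀ hab, div_le_iff₀ hab]; constructor <;> linarith
  have ha' : a = E * (1 + ε) := by simp only [E, ε]; field_simp; ring
  have hb' : b = E * (1 - ε) := by simp only [E, ε]; field_simp; ring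
  have hEp : (E ^ 2) ^ (p / 2) = E ^ p := by
    rw [← rpow_natCast, ← rpow_mul hE.le]; congr 1; push_cast; ring
  calc (((a + b) / 2) ^ 2 + (p - 1) * ((a - b) / 2) ^ 2) ^ (p / 2)
      = E ^ p * (1 + (p - 1) * ε ^ 2) ^ (p / 2) := by
        rw [← hEp, ← mul_rpow (by positivity) (by nlinarith [sq_nonneg ε])]
        congr 1
        rw [ha', hb']
        ring
    _ ≤ E ^ p * (((1 + ε) ^ p + (1 - ε) ^ p) / 2) := by
        gcongr
        exact one_add_mul_sq_rpow_le hp₁ hp₂ hε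
    _ = (a ^ p + b ^ p) / 2 := by
        rw [ha', hb', mul_rpow hE.le (by linarith [(abs_le.mp hε).1]),
          mul_rpow hE.le (by linarith [(abs_le.mp hε).2])]
        ring

lemma mul_add_mul_mul_le_of_sq_add_mul_sq_le {ρ x₁ y₁ x₂ y₂ m₁ m₂ : ℝ} (hρ : 0 ≤ ρ)
    (hm₁ : 0 ≤ m₁) (hm₂ : 0 ≤ m₂) (h₁ : x₁ ^ 2 + ρ * y₁ ^ 2 ≤ m₁ ^ 2)
    (h₂ : x₂ ^ 2 + ρ * y₂ ^ 2 ≤ m₂ ^ 2) :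
    x₁ * x₂ + ρ * y₁ * y₂ ≤ m₁ * m₂ := by
  have hCS : (x₁ * x₂ + ρ * y₁ * y₂) ^ 2 ≤ (x₁ ^ 2 + ρ * y₁ ^ 2) * (x₂ ^ 2 + ρ * y₂ ^ 2) := by
    nlinarith [mul_nonneg hρ (sq_nonneg (x₁ * y₂ - x₂ * y₁))]
  have : (x₁ * x₂ + ρ * y₁ * y₂) ^ 2 ≤ (m₁ * m₂) ^ 2 :=
    hCS.trans (by rw [mul_pow]; gcongr)
  exact (le_abs_self _).trans (abs_le_of_sq_le_sq this (by positivity))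

theorem kernelBound_bool {p : ℝ} (hp₁ : 1 ≤ p) (hp₂ : p ≤ 2) :
    KernelBound p (2 ^ (2 - 2 / p)) fun a b : Bool => if a = b then p else 2 - p := by
  have hp : 0 < p := by linarith
  have hmean : ∀ a b : ℝ, 0 ≤ a → 0 ≤ b →
      ((a + b) / 2) ^ 2 + (p - 1) * ((a - b) / 2) ^ 2 ≤ (((a ^ p + b ^ p) / 2) ^ p⁻¹) ^ 2 := by
    intro a b ha hb
    set Q := ((a + b) / 2) ^ 2 + (p - 1) * ((a - b) / 2) ^ 2
    have hQ : 0 ≤ Q := add_nonneg (sq_nonneg _) (mul_nonneg (by linarith) (sq_nonneg _))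
    have hroot : √Q ≤ ((a ^ p + b ^ p) / 2) ^ p⁻¹ := by
      rw [le_rpow_inv_iff_of_pos (sqrt_nonneg _) (by positivity) hp, sqrt_eq_rpow, ← rpow_mul hQ]
      convert sq_add_mul_sq_rpow_le hp₁ hp₂ ha hb using 2
      ring
    calc Q = √Q ^ 2 := (sq_sqrt hQ).symm
      _ ≤ _ := by gcongr
  intro f g hf hg
  have h2 : (2 : ℝ) ^ (2 - 2 / p) = 4 / (2 ^ p⁻¹ * 2 ^ p⁻¹) := by
    rw [← rpow_add two_pos, rpow_sub two_pos]; norm_num; ring_nf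
  have hmean_nonneg : ∀ h : Bool → ℝ, (∀ a, 0 ≤ h a) → 0 ≤ h true ^ p + h false ^ p :=
    fun h hh => add_nonneg (rpow_nonneg (hh _) p) (rpow_nonneg (hh _) p)
  -- The left-hand side is `4 (E E' + (p - 1) D D')` with `E, D = (f true ± f false) / 2`.
  have hF := hmean_nonneg f hf
  have hG := hmean_nonneg g hg
  have key := mul_add_mul_mul_le_of_sq_add_mul_sq_le (by linarith)
    (rpow_nonneg (by linarith) _) (rpow_nonneg (by linarith) _)
    (hmean _ _ (hf true) (hf false)) (hmean _ _ (hg true) (hg false))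
  simp only [Fintype.sum_bool, pNorm, if_true, Bool.true_eq_false, Bool.false_eq_true, if_false]
  rw [div_rpow hF zero_le_two, div_rpow hG zero_le_two] at key
  rw [h2]
  field_simp at key ⊢
  nlinarith [key]

theorem kernelBound_bool_ite {r s : ℝ} (hr : 0 < r) (hs : 0 ≤ s) (hsr : s ≤ r) :
    KernelBound (2 * r / (r + s)) ((r + s) * 2 ^ (-(s / r)))
      fun a b : Bool => if a = b then r else s := by
  have hrs : 0 < r + s := by linarith
  have h := (kernelBound_bool (p := 2 * r / (r + s))
    (by rw [le_div_iff₀ hrs]; linarith) (by rw [div_le_iff₀ hrs]; linarith)).const_mul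
    (c := (r + s) / 2) (by positivity)
  convert h using 1
  · rw [show 2 - 2 / (2 * r / (r + s)) = 1 + -(s / r) by field_simp; ring, rpow_add two_pos,
      rpow_one]
    ring
  · ext a b
    split_ifs <;> field_simp
    ring

lemma prod_ite_eq_pow_agree {M : Type*} [CommMonoid M] {n : ℕ} (x y : Fin n → Bool) (r s : M) :
    ∏ i, (if x i = y i then r else s) = r ^ agree x y * s ^ (n - agree x y) := by
  rw [prod_ite, prod_const, prod_const, agree]
  congr 2
  have := card_filter_add_card_filter_not (s := univ) (fun i => x i = y i)
  rw [card_univ, Fintype.card_fin] at this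
  omega

lemma pNorm_indicator {ι : Type*} [Fintype ι] [DecidableEq ι] {p : ℝ} (hp : 0 < p) (S : Finset ι) :
    pNorm p (fun x => if x ∈ S then (1 : ℝ) else 0) = (S.card : ℝ) ^ p⁻¹ := by
  simp [pNorm, apply_ite (· ^ p), zero_rpow hp.ne', sum_ite_mem]

theorem sum_pow_agree_le {r s : ℝ} (hr : 0 < r) (hs : 0 ≤ s) (hsr : s ≤ r) {n : ℕ}
    (S T : Finset (Fin n → Bool)) :
    ∑ x ∈ S, ∑ y ∈ T, r ^ agree x y * s ^ (n - agree x y)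
      ≤ ((r + s) * 2 ^ (-(s / r))) ^ n * (S.card : ℝ) ^ ((r + s) / (2 * r))
        * (T.card : ℝ) ^ ((r + s) / (2 * r)) := by
  have hp : 0 < 2 * r / (r + s) := by positivity
  have h := (kernelBound_bool_ite hr hs hsr).pi hp.ne' (by positivity)
    (fun a b => by split_ifs <;> linarith) n
    (fun x => if x ∈ S then 1 else 0) (fun y => if y ∈ T then 1 else 0)
    (fun x => by split_ifs <;> norm_num) (fun y => by split_ifs <;> norm_num)
  simpa only [prod_ite_eq_pow_agree, pNorm_indicator hp, inv_div, ite_mul, one_mul, zero_mul,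
    sum_ite_irrel, sum_const_zero, Fintype.sum_ite_mem] using h

lemma div_le_logb_two_add {r s : ℝ} (hr : 1 ≤ r) (hs : 0 ≤ s) (hsr : s ≤ r) :
    s / r ≤ logb 2 (r + s) := by
  rw [le_logb_iff_rpow_le one_lt_two (by linarith)]
  calc (2 : ℝ) ^ (s / r) = (1 + 1) ^ (s / r) := by norm_num
    _ ≤ 1 + s / r * 1 := rpow_one_add_le_one_add_mul_self (by norm_num) (by positivity)
        (div_le_one_of_le₀ hsr (by linarith))
    _ ≤ r + s := by linarith [div_le_self hs hr]

theorem logb_sum_pow_agree_le {r s : ℝ} (hr : 1 ≤ r) (hs : 0 ≤ s) (hsr : s ≤ r) {n : ℕ}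
    (S T : Finset (Fin n → Bool)) :
    logb 2 (∑ x ∈ S, ∑ y ∈ T, r ^ agree x y * s ^ (n - agree x y))
      ≤ n * (logb 2 (r + s) - s / r) + (r + s) / (2 * r) * (logb 2 S.card + logb 2 T.card) := by
  have hrs : 0 < r + s := by linarith
  have hlog_card : ∀ U : Finset (Fin n → Bool), 0 ≤ logb 2 U.card := fun U =>
    div_nonneg (log_natCast_nonneg _) (log_nonneg one_le_two)
  -- For `s = 0` the sum can vanish, and then `logb 2 0 = 0`.
  rcases (sum_nonneg fun x _ => sum_nonneg fun y _ => by positivity :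
    0 ≤ ∑ x ∈ S, ∑ y ∈ T, r ^ agree x y * s ^ (n - agree x y)).eq_or_lt with h0 | hpos
  · rw [← h0, logb_zero]
    exact add_nonneg (mul_nonneg n.cast_nonneg (sub_nonneg.2 (div_le_logb_two_add hr hs hsr)))
      (mul_nonneg (div_nonneg hrs.le (by linarith)) (add_nonneg (hlog_card S) (hlog_card T)))
  obtain ⟨x, -, hx⟩ := exists_ne_zero_of_sum_ne_zero hpos.ne'
  have hS : (0 : ℝ) < S.card := by exact_mod_cast (nonempty_of_sum_ne_zero hpos.ne').card_pos
  have hT : (0 : ℝ) < T.card := by exact_mod_cast (nonempty_of_sum_ne_zero hx).card_pos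
  calc _ ≤ logb 2 (((r + s) * 2 ^ (-(s / r))) ^ n * (S.card : ℝ) ^ ((r + s) / (2 * r))
        * (T.card : ℝ) ^ ((r + s) / (2 * r))) :=
        logb_le_logb_of_le one_lt_two hpos (sum_pow_agree_le (by linarith) hs hsr S T)
    _ = _ := by
        rw [logb_mul (by positivity) (by positivity), logb_mul (by positivity) (by positivity),
          logb_pow, logb_mul hrs.ne' (by positivity), logb_rpow two_pos one_lt_two.ne',
          logb_rpow_eq_mul_logb_of_pos hS, logb_rpow_eq_mul_logb_of_pos hT]
        ring

theorem counting_form (n : ℕ) (r s : ℕ) (hr : 1 ≤ r) (hs : s ≤ r)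
    (S T : Finset (Fin n → Bool)) :
    Real.logb 2 (∑ x ∈ S, ∑ y ∈ T, (r:ℝ) ^ (agree x y) * (s:ℝ) ^ (n - agree x y))
      ≤ n * (Real.logb 2 ((r:ℝ)+s) - (s:ℝ)/r)
        + (((r:ℝ)+s)/(2*r)) * (Real.logb 2 S.card + Real.logb 2 T.card) :=
  logb_sum_pow_agree_le (by exact_mod_cast hr) s.cast_nonneg (by exact_mod_cast hs) S T
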